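/- Let 2 ≤ k ≤ n and let A be a real symmetric n×n matrix with A ∈ Γ_k. If σ_k(A) = C_n^k and σ_{k−1}(A) = C_n^{k−1}, then all eigenvalues of A are equal to 1, i.e. A = I. -/

import Mathlib

open Matrix

/-- The `k`-th elementary symmetric function of the eigenvalues of an `n × n` real
matrix `A`, characterized by `det (t • I + A) = ∑ j ≤ n, sigmaElem n j A * t ^ (n - j)`.
Concretely it is the coefficient of `t^(n-k)` in the characteristic polynomial of `-A`.
By convention `sigmaElem n 0 A = 1` and `sigmaElem n k A = 0` for `k > n`. -/
noncomputable def sigmaElem (n k : ℕ) (A : Matrix (Fin n) (Fin n) ℝ) : ℝ :=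
  if k ≤ n then ((-A).charpoly).coeff (n - k) else 0

/-- `sigmaD n k A i j = ∂σ_k/∂a_{ij} (A)`, the `(i,j)` entry of the gradient matrix
`σ_k'(A)` of the polynomial map `A ↦ σ_k(A)`. -/
noncomputable def sigmaD (n k : ℕ) (A : Matrix (Fin n) (Fin n) ℝ) (i j : Fin n) : ℝ :=
  deriv (fun t : ℝ => sigmaElem n k (A + t • Matrix.single i j 1)) 0

/-- The gradient matrix `σ_k'(A)` of the polynomial map `A ↦ σ_k(A)`. -/
noncomputable def sigmaGrad (n k : ℕ) (A : Matrix (Fin n) (Fin n) ℝ) :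
    Matrix (Fin n) (Fin n) ℝ :=
  Matrix.of fun i j => sigmaD n k A i j

/-- The Gårding cone `Γ_k`: real symmetric `n × n` matrices with `σ_j(A) > 0` for
`j = 1, …, k`. -/
def GammaCone (n k : ℕ) : Set (Matrix (Fin n) (Fin n) ℝ) :=
  {A | A.IsSymm ∧ ∀ j, 1 ≤ j → j ≤ k → 0 < sigmaElem n j A}

/-- Partial derivative `∂u/∂x_i` of `u : ℝⁿ → ℝ`. -/
noncomputable def pd (n : ℕ) (u : (Fin n → ℝ) → ℝ) (i : Fin n) (x : Fin n → ℝ) : ℝ :=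
  fderiv ℝ u x (Pi.single i 1)

/-- The Hessian matrix `D²u(x) = (∂²u/∂x_i∂x_j (x))`. -/
noncomputable def hess (n : ℕ) (u : (Fin n → ℝ) → ℝ) (x : Fin n → ℝ) :
    Matrix (Fin n) (Fin n) ℝ :=
  Matrix.of fun i j => pd n (fun y => pd n u j y) i x

/-!
Let `λ` be the eigenvalues of `A` and `E_j = σ_j(λ) / C(n, j)` the normalized elementary
symmetric means. Newton's inequalities `E_i E_{i+2} ≤ E_{i+1}²` hold for every real multiset:
differentiating `∏ (X - λ_i)` keeps the polynomial real-rooted (Rolle) and does not change the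
means, which reduces them to the case of `i + 2` variables, done by induction on `i`.
On `Γ_k` the means `E_1, …, E_k` are positive, so log-concavity and `E_{k-1} = E_k = 1` force
`1 = E_0 ≤ E_1 ≤ ⋯ ≤ E_k = 1`. With `E_1 = E_2 = 1` one gets
`∑ (λ_i - 1)² = (∑ λ_i)² - 2 σ_2 - 2 ∑ λ_i + n = 0`.
-/

open Polynomial

namespace Multiset

lemma esymm_cons_succ (a : ℝ) (s : Multiset ℝ) (j : ℕ) :
    (a ::ₘ s).esymm (j + 1) = s.esymm (j + 1) + a * s.esymm j := by
  simp only [esymm, powersetCard_cons, map_add, sum_add, map_map, Function.comp_def, prod_cons,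
    sum_map_mul_left]

lemma esymm_eq_zero_of_card_lt {s : Multiset ℝ} {j : ℕ} (h : card s < j) : s.esymm j = 0 := by
  simp [esymm, powersetCard_eq_empty _ h]

@[simp]
lemma esymm_zero (s : Multiset ℝ) : s.esymm 0 = 1 := by
  simp [esymm]

lemma esymm_one_eq_sum (s : Multiset ℝ) : s.esymm 1 = s.sum := by
  simp [esymm, powersetCard_one, map_map]

lemma sum_map_sq_eq (s : Multiset ℝ) :
    (s.map (· ^ 2)).sum = s.esymm 1 ^ 2 - 2 * s.esymm 2 := by
  induction s using Multiset.induction with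
  | empty => simp [esymm_one_eq_sum, esymm_eq_zero_of_card_lt (s := 0) (j := 2) (by simp)]
  | cons a t ih =>
    rw [map_cons, sum_cons, ih, show 2 = 1 + 1 from rfl, esymm_cons_succ, esymm_cons_succ,
      esymm_zero]
    ring

lemma two_mul_esymm_mul_le_of_card_eq (m : ℕ) {s : Multiset ℝ} (hs : card s = m + 2) :
    2 * (m + 2) * (s.esymm m * s.esymm (m + 2)) ≤ (m + 1) * s.esymm (m + 1) ^ 2 := by
  induction m generalizing s with
  | zero =>
    obtain ⟨x, y, rfl⟩ := card_eq_two.mp hs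
    simp only [insert_eq_cons, zero_add, Nat.cast_zero, esymm_zero, esymm_pair_one, esymm_pair_two]
    nlinarith [sq_nonneg (x - y)]
  | succ m ih =>
    obtain ⟨x, t, rfl⟩ : ∃ x t, s = x ::ₘ t := by
      obtain ⟨x, hx⟩ := card_pos_iff_exists_mem.mp (by omega : 0 < card s)
      exact ⟨x, _, (cons_erase hx).symm⟩
    have ht : card t = m + 2 := by simpa using hs
    have top : (x ::ₘ t).esymm (m + 1 + 2) = x * t.esymm (m + 2) := by
      rw [esymm_cons_succ, esymm_eq_zero_of_card_lt (by omega), zero_add]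
    rw [top, esymm_cons_succ, esymm_cons_succ]
    push_cast
    set R := t.esymm m
    set Q := t.esymm (m + 1)
    set P := t.esymm (m + 2)
    have hgap : 0 ≤ (m + 1) * Q ^ 2 - 2 * (m + 2) * (R * P) := by linarith [ih ht]
    have key :
        ((m : ℝ) + 2) * ((m + 2) * (P + x * Q) ^ 2 - 2 * (m + 3) * ((Q + x * R) * (x * P))) =
          ((m + 2) * P - x * Q) ^ 2 +
            (m + 3) * x ^ 2 * ((m + 1) * Q ^ 2 - 2 * (m + 2) * (R * P)) := by
      ring
    have hm : (0 : ℝ) < m + 2 := by positivity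
    nlinarith [sq_nonneg ((m + 2) * P - x * Q),
      mul_nonneg (by positivity : (0 : ℝ) ≤ (m + 3) * x ^ 2) hgap]

noncomputable def esymmMean (s : Multiset ℝ) (j : ℕ) : ℝ := s.esymm j / (card s).choose j

lemma esymmMean_mul_esymmMean_le_sq_of_card_eq (m : ℕ) {s : Multiset ℝ} (hs : card s = m + 2) :
    s.esymmMean m * s.esymmMean (m + 2) ≤ s.esymmMean (m + 1) ^ 2 := by
  have hc0 : ((m + 2).choose m : ℝ) = (m + 2) * (m + 1) / 2 := by
    rw [Nat.choose_symm_of_eq_add (b := 2) rfl, Nat.cast_choose_two]; push_cast; ring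
  have hc1 : ((m + 2).choose (m + 1) : ℝ) = m + 2 := by
    rw [Nat.choose_succ_self_right]; push_cast; ring
  simp only [esymmMean, hs, hc0, hc1, Nat.choose_self, Nat.cast_one, div_one]
  have := two_mul_esymm_mul_le_of_card_eq m hs
  rw [div_pow, div_mul_eq_mul_div, div_le_div_iff₀ (by positivity) (by positivity)]
  nlinarith

variable {s : Multiset ℝ} {n : ℕ}

/-- By Rolle's theorem the derivative of a real-rooted polynomial is real-rooted. -/
lemma natDegree_and_card_roots_derivative_prod_X_sub_C (hs : card s = n + 1) :
    (derivative (s.map (X - C ·)).prod).natDegree = n ∧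
      card (derivative (s.map (X - C ·)).prod).roots = n := by
  set P := (s.map (X - C ·)).prod
  have hdeg : P.natDegree = n + 1 := by simp [P, natDegree_multiset_prod_X_sub_C_eq_card, hs]
  have hroots : P.roots = s := roots_multiset_prod_X_sub_C s
  have h1 := natDegree_derivative_le P
  have h2 := card_roots_le_derivative P
  have h3 := card_roots' (derivative P)
  rw [hroots, hs] at h2
  omega

lemma esymm_roots_derivative_prod_X_sub_C (hs : card s = n + 1) {l : ℕ} (hl : l ≤ n) :
    (n + 1) * (derivative (s.map (X - C ·)).prod).roots.esymm l =
      ((n - l : ℕ) + 1) * s.esymm l := by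
  set P := (s.map (X - C ·)).prod
  obtain ⟨hdeg, hcard⟩ := natDegree_and_card_roots_derivative_prod_X_sub_C hs
  have hP : ∀ k ≤ n + 1, P.coeff k = (-1) ^ (n + 1 - k) * s.esymm (n + 1 - k) := fun k hk => by
    simpa [hs] using prod_X_sub_C_coeff s (hs ▸ hk : k ≤ card s)
  have hlead : (derivative P).leadingCoeff = n + 1 := by
    rw [leadingCoeff, hdeg, coeff_derivative, hP _ le_rfl]; simp
  have hvieta := coeff_eq_esymm_roots_of_card (hcard.trans hdeg.symm) (hdeg ▸ Nat.sub_le n l)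
  rw [hlead, hdeg, Nat.sub_sub_self hl, coeff_derivative, hP _ (by omega),
    show n + 1 - (n - l + 1) = l by omega] at hvieta
  refine mul_left_cancel₀ (pow_ne_zero l (by norm_num : (-1 : ℝ) ≠ 0)) ?_
  linear_combination -hvieta

lemma esymmMean_roots_derivative_prod_X_sub_C (hs : card s = n + 1) {l : ℕ} (hl : l ≤ n) :
    (derivative (s.map (X - C ·)).prod).roots.esymmMean l = s.esymmMean l := by
  have he := esymm_roots_derivative_prod_X_sub_C hs hl
  have hc : (n.choose l : ℝ) * (n + 1) = (n + 1).choose l * ((n - l : ℕ) + 1) := by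
    have := Nat.choose_mul_succ_eq n l
    rw [Nat.sub_add_comm hl] at this
    exact_mod_cast this
  have hpos : (0 : ℝ) < n.choose l := by exact_mod_cast Nat.choose_pos hl
  have hpos' : (0 : ℝ) < (n + 1).choose l := by exact_mod_cast Nat.choose_pos (by omega)
  simp only [esymmMean, hs, (natDegree_and_card_roots_derivative_prod_X_sub_C hs).2]
  rw [div_eq_div_iff hpos.ne' hpos'.ne']
  refine mul_left_cancel₀ (n.cast_add_one_ne_zero : (n : ℝ) + 1 ≠ 0) ?_
  linear_combination ((n + 1).choose l : ℝ) * he - s.esymm l * hc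

theorem esymmMean_mul_esymmMean_le_sq {i : ℕ} (hi : i + 2 ≤ card s) :
    s.esymmMean i * s.esymmMean (i + 2) ≤ s.esymmMean (i + 1) ^ 2 := by
  obtain ⟨d, hd⟩ := Nat.exists_eq_add_of_le hi
  induction d generalizing s with
  | zero => exact esymmMean_mul_esymmMean_le_sq_of_card_eq i hd
  | succ d ih =>
    have hs : card s = i + 2 + d + 1 := hd
    have hmean l (hl : l ≤ i + 2) :=
      esymmMean_roots_derivative_prod_X_sub_C hs (l := l) (by omega)
    rw [← hmean i (by omega), ← hmean (i + 1) (by omega), ← hmean (i + 2) le_rfl]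
    have hcard := (natDegree_and_card_roots_derivative_prod_X_sub_C hs).2
    exact ih (by omega) hcard

lemma sum_map_sub_one_sq (s : Multiset ℝ) :
    (s.map fun x => (x - 1) ^ 2).sum = s.esymm 1 ^ 2 - 2 * s.esymm 2 - 2 * s.esymm 1 + card s := by
  rw [← sub_eq_zero, ← sum_map_sq_eq, esymm_one_eq_sum]
  induction s using Multiset.induction with
  | empty => simp
  | cons a t ih => simp only [map_cons, sum_cons, card_cons]; push_cast; linear_combination ih

lemma forall_eq_one_of_esymmMean_one_two (h1 : s.esymmMean 1 = 1) (h2 : s.esymmMean 2 = 1) :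
    ∀ x ∈ s, x = 1 := by
  have hc2 : ((card s).choose 2 : ℝ) ≠ 0 := by
    rintro hc; simp [esymmMean, hc] at h2
  have hn : ((card s : ℕ) : ℝ) ≠ 0 := by
    rintro hn; simp [esymmMean, hn] at h1
  have he1 : s.esymm 1 = card s := by simpa [esymmMean, div_eq_one_iff_eq hn] using h1
  have he2 : s.esymm 2 = (card s).choose 2 := (div_eq_one_iff_eq hc2).mp h2
  have hsum : (s.map fun x => (x - 1) ^ 2).sum = 0 := by
    rw [sum_map_sub_one_sq, he1, he2, Nat.cast_choose_two]
    ring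
  intro x hx
  obtain ⟨t, rfl⟩ := exists_cons_of_mem hx
  have ht : 0 ≤ (t.map fun x => (x - 1) ^ 2).sum := sum_nonneg fun y hy => by
    obtain ⟨z, -, rfl⟩ := mem_map.mp hy; positivity
  rw [map_cons, sum_cons] at hsum
  nlinarith [sq_nonneg (x - 1)]

end Multiset

lemma monotoneOn_Iic_of_mul_le_sq {p : ℕ → ℝ} {k : ℕ}
    (hpos : ∀ j, 1 ≤ j → j ≤ k → 0 < p j)
    (hlc : ∀ i, i + 2 ≤ k → p i * p (i + 2) ≤ p (i + 1) ^ 2) (hlast : p (k - 1) ≤ p k) :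
    MonotoneOn p (Set.Iic k) := by
  have hstep : ∀ j, j + 1 ≤ k → p j ≤ p (j + 1) := fun j hj => by
    have hk : 1 ≤ k := by omega
    replace hj : j ≤ k - 1 := by omega
    induction hj using Nat.decreasingInduction with
    | self => rwa [Nat.sub_add_cancel hk]
    | of_succ j hj ih =>
      refine le_of_mul_le_mul_right ?_ (hpos (j + 2) (by omega) (by omega))
      calc p j * p (j + 2) ≤ p (j + 1) ^ 2 := hlc j (by omega)
        _ ≤ p (j + 1) * p (j + 2) := by
          rw [sq]; exact mul_le_mul_of_nonneg_left ih (hpos _ (by omega) (by omega)).le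
  exact monotoneOn_of_le_add_one Set.ordConnected_Iic fun j _ _ hj => hstep j hj

namespace Matrix.IsHermitian

variable {𝕜 ι : Type*} [RCLike 𝕜] [Fintype ι] [DecidableEq ι] {A : Matrix ι ι 𝕜}

lemma charpoly_neg_eq (hA : A.IsHermitian) :
    (-A).charpoly = ∏ i, (X + C (hA.eigenvalues i : 𝕜)) := by
  conv_lhs => rw [hA.spectral_theorem, ← map_neg, Unitary.conjStarAlgAut_apply,
    charpoly_mul_comm, ← mul_assoc]
  simp [charpoly_diagonal, sub_eq_add_neg]

lemma eq_one_of_eigenvalues_eq_one (hA : A.IsHermitian) (h : ∀ i, hA.eigenvalues i = 1) :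
    A = 1 := by
  rw [hA.spectral_theorem]
  simp [Function.comp_def, h]

end Matrix.IsHermitian

lemma sigmaElem_eq_esymm_eigenvalues {n j : ℕ} {A : Matrix (Fin n) (Fin n) ℝ}
    (hA : A.IsHermitian) (hj : j ≤ n) :
    sigmaElem n j A = (Finset.univ.val.map hA.eigenvalues).esymm j := by
  have := Multiset.prod_X_add_C_coeff' Finset.univ.val hA.eigenvalues (k := n - j) (by simp)
  rw [sigmaElem, if_pos hj, hA.charpoly_neg_eq, Finset.prod_eq_multiset_prod]
  simpa [Nat.sub_sub_self hj] using this

/-- equality case of the MacLaurin inequalities: if `A ∈ Γ_k`,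
`σ_k(A) = C_n^k` and `σ_{k-1}(A) = C_n^{k-1}`, then `A = I`. -/
theorem statement11 (n k : ℕ) (hk2 : 2 ≤ k) (hkn : k ≤ n)
    (A : Matrix (Fin n) (Fin n) ℝ) (hA : A ∈ GammaCone n k)
    (hk : sigmaElem n k A = (n.choose k : ℝ))
    (hk1 : sigmaElem n (k - 1) A = (n.choose (k - 1) : ℝ)) :
    A = (1 : Matrix (Fin n) (Fin n) ℝ) := by
  obtain ⟨hsymm, hpos⟩ := hA
  have hH : A.IsHermitian := by rwa [IsHermitian, conjTranspose_eq_transpose_of_trivial]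
  set s := Finset.univ.val.map hH.eigenvalues
  have hcard : Multiset.card s = n := by simp [s]
  have hmean : ∀ j ≤ n, s.esymmMean j = sigmaElem n j A / n.choose j := fun j hj => by
    simp [Multiset.esymmMean, s, sigmaElem_eq_esymm_eigenvalues hH hj]
  have hchoose : ∀ j ≤ n, (0 : ℝ) < n.choose j := fun j hj => mod_cast Nat.choose_pos hj
  have hone_of_eq : ∀ j ≤ n, sigmaElem n j A = n.choose j → s.esymmMean j = 1 :=
    fun j hj h => by rw [hmean j hj, h, div_self (hchoose j hj).ne']
  have hmono : MonotoneOn s.esymmMean (Set.Iic k) := by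
    refine monotoneOn_Iic_of_mul_le_sq (fun j hj1 hjk => ?_)
      (fun i hi => Multiset.esymmMean_mul_esymmMean_le_sq (hcard ▸ by omega)) ?_
    · rw [hmean j (by omega)]; exact div_pos (hpos j hj1 hjk) (hchoose j (by omega))
    · rw [hone_of_eq k hkn hk, hone_of_eq (k - 1) (by omega) hk1]
  have hone : ∀ j ≤ k, s.esymmMean j = 1 := fun j hj => le_antisymm
    (hone_of_eq k hkn hk ▸ hmono hj (Set.mem_Iic.2 le_rfl) hj)
    (by simpa [Multiset.esymmMean] using hmono (Nat.zero_le k) hj (Nat.zero_le j))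
  exact hH.eq_one_of_eigenvalues_eq_one fun i => s.forall_eq_one_of_esymmMean_one_two
    (hone 1 (by omega)) (hone 2 hk2) _ (Multiset.mem_map_of_mem _ (Finset.mem_univ i))
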